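/- Let M̃ be an irreducible finite family of matrices with ρ̂(M̃) ≥ 1, and suppose for some nonzero vector v the trajectory set Ω(v) = ∪_{k ≥ 0} {Γ v : Γ ∈ M̃^k} is bounded and spans R^d. Then ρ̂(M̃) = 1, and the closure of the symmetrized convex hull of Ω(v) is the unit ball of an extremal norm for M̃. -/

import Mathlib

/-!
The set `D = closure (convexHull (Ω ∪ -Ω))` is the closed absolutely convex hull of `Ω = Ω(v)`.
Since every `A j` maps `Ω` into itself, it maps `D` into itself; `D` is bounded because `Ω` is,
and it is a neighbourhood of `0` because it is absolutely convex and spans the space. Every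
product of the `A j` therefore maps `D` into itself, so these products have uniformly bounded
operator norms, and the `k`-th roots of a bounded sequence cannot converge to a limit above `1`.
-/

open Filter Topology

/-- The product of length `k` of operators from the family `A`. -/
noncomputable def prodCLM {E : Type*} [NormedAddCommGroup E] [NormedSpace ℝ E] {m : ℕ}
    (A : Fin m → E →L[ℝ] E) (k : ℕ) (w : Fin k → Fin m) : E →L[ℝ] E :=
  (List.ofFn fun i => A (w i)).prod

open Set Metric Bornology

section Products

variable {E : Type*} [NormedAddCommGroup E] [NormedSpace ℝ E] {m : ℕ} (A : Fin m → E →L[ℝ] E)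

lemma prodCLM_zero (w : Fin 0 → Fin m) : prodCLM A 0 w = 1 := by
  simp [prodCLM]

lemma prodCLM_succ (k : ℕ) (w : Fin (k + 1) → Fin m) :
    prodCLM A (k + 1) w = A (w 0) * prodCLM A k (Fin.tail w) := by
  simp [prodCLM, List.ofFn_succ, Fin.tail]

lemma mapsTo_prodCLM {s : Set E} (hs : ∀ j, MapsTo (A j) s s) (k : ℕ) (w : Fin k → Fin m) :
    MapsTo (prodCLM A k w) s s := by
  induction k with
  | zero => simpa [prodCLM_zero] using mapsTo_id s
  | succ k ih =>
    rw [prodCLM_succ]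
    exact (hs (w 0)).comp (ih (Fin.tail w))

/-- The set `Ω(v)` of the paper. -/
def trajectory (v : E) : Set E := {x | ∃ k : ℕ, ∃ w : Fin k → Fin m, prodCLM A k w v = x}

lemma self_mem_trajectory (v : E) : v ∈ trajectory A v :=
  ⟨0, Fin.elim0, by simp [prodCLM_zero]⟩

lemma mapsTo_trajectory (v : E) (j : Fin m) : MapsTo (A j) (trajectory A v) (trajectory A v) := by
  rintro _ ⟨k, w, rfl⟩
  exact ⟨k + 1, Fin.cons j w, by simp [prodCLM_succ]⟩

end Products

section AbsConvexHull

variable {E : Type*} [AddCommGroup E] [Module ℝ E] [TopologicalSpace E]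

lemma closure_convexHull_union_neg [IsTopologicalAddGroup E] [ContinuousSMul ℝ E] (s : Set E) :
    closure (convexHull ℝ (s ∪ -s)) = closedAbsConvexHull ℝ s := by
  rw [convexHull_union_neg_eq_absConvexHull, closedAbsConvexHull_eq_closure_absConvexHull]

lemma mapsTo_closedAbsConvexHull {F : Type*} [AddCommGroup F] [Module ℝ F] [TopologicalSpace F]
    (T : E →L[ℝ] F) {s : Set E} {t : Set F} (h : MapsTo T s t) :
    MapsTo T (closedAbsConvexHull ℝ s) (closedAbsConvexHull ℝ t) := by
  refine closedAbsConvexHull_min (h.mono_right subset_closedAbsConvexHull) ⟨?_, ?_⟩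
    (isClosed_closedAbsConvexHull.preimage T.continuous)
  · exact absConvex_convexClosedHull.1.mulActionHom_preimage (T : E →ₗ[ℝ] F).toMulActionHom
  · exact absConvex_convexClosedHull.2.linear_preimage (T : E →ₗ[ℝ] F)

end AbsConvexHull

lemma AbsConvex.zero_mem_interior_of_span_eq_top {E : Type*} [NormedAddCommGroup E] [NormedSpace ℝ E]
    [FiniteDimensional ℝ E] {s : Set E} (hs : AbsConvex ℝ s) (hne : s.Nonempty)
    (hspan : Submodule.span ℝ s = ⊤) : (0 : E) ∈ interior s := by
  have h0 : (0 : E) ∈ s := hs.1.zero_mem hne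
  have haff : affineSpan ℝ s = ⊤ := by
    rw [AffineSubspace.affineSpan_eq_top_iff_vectorSpan_eq_top_of_nonempty ℝ E E hne,
      vectorSpan_eq_span_vsub_set_right ℝ h0]
    simpa using hspan
  obtain ⟨x, hx⟩ := hs.2.interior_nonempty_iff_affineSpan_eq_top.2 haff
  have hnx : -x ∈ interior s := by
    rw [← hs.1.neg_eq]
    change -x ∈ interior ((Homeomorph.neg E) ⁻¹' s)
    rw [← Homeomorph.preimage_interior]
    simpa using hx
  simpa using hs.2.interior hx hnx (by norm_num : (0 : ℝ) ≤ 1 / 2) (by norm_num : (0 : ℝ) ≤ 1 / 2)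
    (by norm_num)

lemma Bornology.IsBounded.closedAbsConvexHull {E : Type*} [SeminormedAddCommGroup E]
    [NormedSpace ℝ E] {s : Set E} (hs : IsBounded s) : IsBounded (closedAbsConvexHull ℝ s) := by
  rw [← closure_convexHull_union_neg]
  exact (isBounded_convexHull.2 (hs.union hs.neg)).closure

lemma opNorm_le_of_mapsTo_closedBall {E F : Type*} [NormedAddCommGroup E] [NormedSpace ℝ E]
    [NormedAddCommGroup F] [NormedSpace ℝ F] {T : E →L[ℝ] F} {r R : ℝ} (hr : 0 < r)
    (hT : MapsTo T (closedBall 0 r) (closedBall 0 R)) : ‖T‖ ≤ R / r := by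
  have hR : 0 ≤ R := by simpa using hT (mem_closedBall_self hr.le)
  refine T.opNorm_le_bound (by positivity) fun x => ?_
  rcases eq_or_ne x 0 with rfl | hx
  · simp
  have hxpos : 0 < ‖x‖ := norm_pos_iff.2 hx
  have hscaled : ‖T ((r / ‖x‖) • x)‖ ≤ R := by
    refine mem_closedBall_zero_iff.1 (hT ?_)
    rw [mem_closedBall_zero_iff, norm_smul, Real.norm_of_nonneg (by positivity),
      div_mul_cancel₀ _ hxpos.ne']
  rw [map_smul, norm_smul, Real.norm_of_nonneg (by positivity), div_mul_eq_mul_div,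
    div_le_iff₀ hxpos] at hscaled
  rw [div_mul_eq_mul_div, le_div_iff₀ hr]
  linarith

lemma exists_opNorm_le_of_mapsTo {E : Type*} [NormedAddCommGroup E] [NormedSpace ℝ E]
    {D : Set E} (hD : D ∈ 𝓝 0) (hDb : IsBounded D) :
    ∃ C, ∀ T : E →L[ℝ] E, MapsTo T D D → ‖T‖ ≤ C := by
  obtain ⟨r, hr, hrD⟩ := nhds_basis_closedBall.mem_iff.1 hD
  obtain ⟨R, hDR⟩ := hDb.subset_closedBall 0
  exact ⟨R / r, fun T hT => opNorm_le_of_mapsTo_closedBall hr ((hT.mono_left hrD).mono_right hDR)⟩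

lemma le_one_of_tendsto_rpow_one_div {a : ℕ → ℝ} {C ρ : ℝ} (ha : ∀ k, 0 ≤ a k)
    (haC : ∀ k, a k ≤ C) (h : Tendsto (fun k : ℕ => a k ^ ((1 : ℝ) / k)) atTop (𝓝 ρ)) :
    ρ ≤ 1 := by
  set C' := max C 1
  have hC' : 0 < C' := lt_max_of_lt_right one_pos
  have hlim : Tendsto (fun k : ℕ => C' ^ ((1 : ℝ) / k)) atTop (𝓝 1) := by
    simpa using tendsto_const_nhds.rpow tendsto_one_div_atTop_nhds_zero_nat (Or.inl hC'.ne')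
  exact le_of_tendsto_of_tendsto' h hlim fun k =>
    Real.rpow_le_rpow (ha k) ((haC k).trans (le_max_left _ _)) (by positivity)

lemma le_one_of_tendsto_of_norm_prodCLM_le {E : Type*} [NormedAddCommGroup E]
    [NormedSpace ℝ E] {m : ℕ} {A : Fin m → E →L[ℝ] E} {ρ C : ℝ}
    (hjsr : Tendsto (fun k : ℕ => (⨆ w : Fin k → Fin m, ‖prodCLM A k w‖) ^ ((1 : ℝ) / k))
      atTop (𝓝 ρ))
    (hC : ∀ k w, ‖prodCLM A k w‖ ≤ C) : ρ ≤ 1 := by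
  have hC0 : 0 ≤ C := (norm_nonneg _).trans (hC 0 Fin.elim0)
  exact le_one_of_tendsto_rpow_one_div (fun k => Real.iSup_nonneg fun w => norm_nonneg _)
    (fun k => Real.iSup_le (hC k) hC0) hjsr

theorem trajectory_hull_is_extremal_ball_general
    {d m : ℕ}
    (A : Fin m → (EuclideanSpace ℝ (Fin d) →L[ℝ] EuclideanSpace ℝ (Fin d)))
    (ρhat : ℝ)
    (hjsr : Tendsto (fun k : ℕ => (⨆ w : Fin k → Fin m, ‖prodCLM A k w‖) ^ ((1 : ℝ) / k))
      atTop (𝓝 ρhat))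
    (hρ : 1 ≤ ρhat)
    (v : EuclideanSpace ℝ (Fin d))
    (h_bdd : Bornology.IsBounded
      {x | ∃ k : ℕ, ∃ w : Fin k → Fin m, prodCLM A k w v = x})
    (h_span : Submodule.span ℝ {x | ∃ k : ℕ, ∃ w : Fin k → Fin m, prodCLM A k w v = x} = ⊤) :
    ρhat = 1 ∧
      (let Ω : Set (EuclideanSpace ℝ (Fin d)) :=
        {x | ∃ k : ℕ, ∃ w : Fin k → Fin m, prodCLM A k w v = x}
       let D := closure (convexHull ℝ (Ω ∪ -Ω))
       Convex ℝ D ∧ IsCompact D ∧ (∀ x ∈ D, -x ∈ D) ∧ 0 ∈ interior D ∧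
         ∀ j : Fin m, ∀ x ∈ D, A j x ∈ D) := by
  change IsBounded (trajectory A v) at h_bdd
  change Submodule.span ℝ (trajectory A v) = ⊤ at h_span
  set D := closedAbsConvexHull ℝ (trajectory A v)
  have hD : AbsConvex ℝ D := absConvex_convexClosedHull
  have hDb : IsBounded D := h_bdd.closedAbsConvexHull
  have hmaps (j : Fin m) : MapsTo (A j) D D :=
    mapsTo_closedAbsConvexHull (A j) (mapsTo_trajectory A v j)
  have h0 : 0 ∈ interior D :=
    hD.zero_mem_interior_of_span_eq_top ⟨v, subset_closedAbsConvexHull (self_mem_trajectory A v)⟩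
      (eq_top_mono (Submodule.span_mono subset_closedAbsConvexHull) h_span)
  obtain ⟨C, hC⟩ := exists_opNorm_le_of_mapsTo (mem_interior_iff_mem_nhds.1 h0) hDb
  have hρ1 : ρhat ≤ 1 :=
    le_one_of_tendsto_of_norm_prodCLM_le hjsr fun k w => hC _ (mapsTo_prodCLM A hmaps k w)
  refine ⟨le_antisymm hρ1 hρ, ?_⟩
  dsimp only
  rw [closure_convexHull_union_neg]
  exact ⟨hD.2, isCompact_of_isClosed_isBounded isClosed_closedAbsConvexHull hDb,
    fun x hx => hD.1.neg_mem_iff.2 hx, h0, hmaps⟩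

/-- let `M̃` be an irreducible family with `ρ̂(M̃) ≥ 1` and suppose for some
`v ≠ 0` the trajectory set `Ω(v) = ⋃_k M̃^k v` is bounded and spans `ℝ^d`.  Then
`ρ̂(M̃) = 1` and the closure of the symmetrized convex hull of `Ω(v)` is the unit ball of
an extremal norm for `M̃`: it is a compact convex symmetric body with `0` in its interior,
mapped into itself by every `Ã_j`. -/
theorem trajectory_hull_is_extremal_ball
    {d m : ℕ} (hm : 0 < m)
    (A : Fin m → (EuclideanSpace ℝ (Fin d) →L[ℝ] EuclideanSpace ℝ (Fin d)))
    (h_irr : ¬ ∃ W : Submodule ℝ (EuclideanSpace ℝ (Fin d)),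
      W ≠ ⊥ ∧ W ≠ ⊤ ∧ ∀ j : Fin m, ∀ x ∈ W, A j x ∈ W)
    (ρhat : ℝ)
    (hjsr : Tendsto (fun k : ℕ => (⨆ w : Fin k → Fin m, ‖prodCLM A k w‖) ^ ((1 : ℝ) / k))
      atTop (𝓝 ρhat))
    (hρ : 1 ≤ ρhat)
    (v : EuclideanSpace ℝ (Fin d)) (hv : v ≠ 0)
    (h_bdd : Bornology.IsBounded
      {x | ∃ k : ℕ, ∃ w : Fin k → Fin m, prodCLM A k w v = x})
    (h_span : Submodule.span ℝ {x | ∃ k : ℕ, ∃ w : Fin k → Fin m, prodCLM A k w v = x} = ⊤) :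
    ρhat = 1 ∧
      (let Ω : Set (EuclideanSpace ℝ (Fin d)) :=
        {x | ∃ k : ℕ, ∃ w : Fin k → Fin m, prodCLM A k w v = x}
       let D := closure (convexHull ℝ (Ω ∪ -Ω))
       Convex ℝ D ∧ IsCompact D ∧ (∀ x ∈ D, -x ∈ D) ∧ 0 ∈ interior D ∧
         ∀ j : Fin m, ∀ x ∈ D, A j x ∈ D) :=
  trajectory_hull_is_extremal_ball_general A ρhat hjsr hρ v h_bdd h_span
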